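/- Duality rule for entropy: for all symmetric probability measures x1, x2 ∈ X, H(x1 ⊛ x2) + H(x1 ⊠ x2) = H(x1) + H(x2). -/

import Mathlib

open MeasureTheory Real Filter Topology Polynomial

noncomputable section

/-- The space of finite signed Borel measures on the extended reals `ℝ̄`. -/
abbrev SM := MeasureTheory.SignedMeasure EReal

namespace SCLDPC

/-- The weight `e^{-α/2}` as an extended nonnegative real (`+∞` at `α = -∞`). -/
def wt (α : EReal) : ENNReal :=
  if α = ⊥ then ⊤ else if α = ⊤ then 0 else ENNReal.ofReal (Real.exp (-(α.toReal) / 2))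

/-- A (nonnegative) Borel measure `μ` on `ℝ̄` is symmetric if
`∫_{-E} e^{-α/2} μ(dα) = ∫_{E} e^{-α/2} μ(dα)` for every Borel set `E`
(stated with extended nonnegative integrals, which is equivalent to requiring
equality whenever one of the two sides is finite). -/
def IsSymmMeasure (μ : Measure EReal) : Prop :=
  ∀ E : Set EReal, MeasurableSet E →
    ∫⁻ α in (fun a : EReal => -a) ⁻¹' E, wt α ∂μ = ∫⁻ α in E, wt α ∂μ

/-- Positive part of the Jordan decomposition. -/
def jp (x : SM) : Measure EReal := x.toJordanDecomposition.posPart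

/-- Negative part of the Jordan decomposition. -/
def jn (x : SM) : Measure EReal := x.toJordanDecomposition.negPart

instance (x : SM) : IsFiniteMeasure (jp x) := x.toJordanDecomposition.posPart_finite

instance (x : SM) : IsFiniteMeasure (jn x) := x.toJordanDecomposition.negPart_finite

/-- A finite signed Borel measure on `ℝ̄` is symmetric iff both parts of its Jordan
decomposition are symmetric measures. -/
def IsSymm (x : SM) : Prop := IsSymmMeasure (jp x) ∧ IsSymmMeasure (jn x)

/-- Membership in `X`, the set of symmetric probability measures on `ℝ̄`. -/
def MemX (x : SM) : Prop :=
  (∃ (μ : Measure EReal) (hμ : IsProbabilityMeasure μ),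
      x = (letI := hμ; μ.toSignedMeasure)) ∧ IsSymm x

/-- Membership in `X_d`, the set of differences of symmetric probability measures. -/
def MemXd (y : SM) : Prop := ∃ x1 x2 : SM, MemX x1 ∧ MemX x2 ∧ y = x1 - x2

/-- Integral of a real function against a finite signed measure. -/
def sInt (f : EReal → ℝ) (x : SM) : ℝ := (∫ α, f α ∂(jp x)) - ∫ α, f α ∂(jn x)

/-- `tanh(α/2)` extended continuously to `ℝ̄`. -/
def tanhHalf (α : EReal) : ℝ :=
  if α = ⊤ then 1 else if α = ⊥ then -1 else Real.tanh (α.toReal / 2)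

/-- The inverse hyperbolic tangent on `(-1, 1)`. -/
def artanh (t : ℝ) : ℝ := Real.log ((1 + t) / (1 - t)) / 2

/-- `2 tanh⁻¹(t)` valued in `ℝ̄` (sending `t ≥ 1` to `+∞` and `t ≤ -1` to `-∞`). -/
def atanhTwo (t : ℝ) : EReal :=
  if 1 ≤ t then ⊤ else if t ≤ -1 then ⊥ else ((2 * artanh t : ℝ) : EReal)

/-- Variable-node convolution `⊛` of two (nonnegative) measures:
`(μ ⊛ ν)(E) = ∫ μ(E - α) ν(dα)`, i.e. the pushforward of `μ × ν` under addition. -/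
def mConv (μ ν : Measure EReal) : Measure EReal :=
  (μ.prod ν).map fun p => p.1 + p.2

/-- Check-node convolution `⊠` of two (nonnegative) measures:
`(μ ⊠ ν)(E) = ∫ μ(2 tanh⁻¹(tanh(E/2) / tanh(α/2))) ν(dα)`, where the argument of `μ`
is the image of `E` under `β ↦ 2 tanh⁻¹(tanh(β/2) / tanh(α/2))`; equivalently, the
pushforward of `μ × ν` under `(β, α) ↦ 2 tanh⁻¹(tanh(β/2) · tanh(α/2))`. -/
def mCheck (μ ν : Measure EReal) : Measure EReal :=
  (μ.prod ν).map fun p => atanhTwo (tanhHalf p.1 * tanhHalf p.2)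

instance (μ ν : Measure EReal) [IsFiniteMeasure μ] [IsFiniteMeasure ν] :
    IsFiniteMeasure (mConv μ ν) := by unfold mConv; infer_instance

instance (μ ν : Measure EReal) [IsFiniteMeasure μ] [IsFiniteMeasure ν] :
    IsFiniteMeasure (mCheck μ ν) := by unfold mCheck; infer_instance

/-- The variable-node operation `⊛` extended bilinearly to finite signed measures. -/
def sConv (x y : SM) : SM :=
  (mConv (jp x) (jp y)).toSignedMeasure - (mConv (jp x) (jn y)).toSignedMeasure
    - (mConv (jn x) (jp y)).toSignedMeasure + (mConv (jn x) (jn y)).toSignedMeasure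

/-- The check-node operation `⊠` extended bilinearly to finite signed measures. -/
def sCheck (x y : SM) : SM :=
  (mCheck (jp x) (jp y)).toSignedMeasure - (mCheck (jp x) (jn y)).toSignedMeasure
    - (mCheck (jn x) (jp y)).toSignedMeasure + (mCheck (jn x) (jn y)).toSignedMeasure

/-- The integrand `log₂(1 + e^{-α})` of the entropy functional (with the harmless
convention that it vanishes at `α = ±∞`; symmetric measures put no mass at `-∞`). -/
def entFn (α : EReal) : ℝ :=
  if α = ⊤ then 0 else if α = ⊥ then 0 else Real.logb 2 (1 + Real.exp (-(α.toReal)))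

/-- The entropy functional `H(x) = ∫ log₂(1 + e^{-α}) x(dα)`. -/
def H (x : SM) : ℝ := sInt entFn x

/-!
Write `a = tanh(α/2)` and `b = tanh(β/2)`. Away from `-∞` the entropy integrand is
`log₂(1 + e^{-α}) = log₂(2 / (1 + a))`, the check-node output has `tanh(·/2) = a b`, and by
the addition formula `1 + tanh((α+β)/2) = (1 + a)(1 + b) / (1 + a b)`.
Hence the integrands of `H(x₁ ⊛ x₂)` and `H(x₁ ⊠ x₂)` add up pointwise to
`log₂(1 + e^{-α}) + log₂(1 + e^{-β})`, and integrating against `x₁ ⊗ x₂` gives the duality rule.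
Symmetry makes this legitimate: it forbids mass at `-∞` (where `e^{-α/2} = ∞`) and bounds
`∫ e^{-α/2}` by twice the total mass, which dominates `log₂(1 + e^{-α}) ≤ (2 / log 2) e^{-α/2}`.
-/

theorem _root_.Real.tanh_add (x y : ℝ) :
    tanh (x + y) = (tanh x + tanh y) / (1 + tanh x * tanh y) := by
  have hx := (cosh_pos x).ne'
  have hy := (cosh_pos y).ne'
  have hxy : cosh x * cosh y + sinh x * sinh y ≠ 0 := by
    rw [← cosh_add]; exact (cosh_pos _).ne'
  simp only [tanh_eq_sinh_div_cosh, sinh_add, cosh_add]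
  field_simp

open Set

lemma measurable_wt : Measurable wt := by
  unfold wt
  refine .ite measurableSet_eq measurable_const (.ite measurableSet_eq measurable_const ?_)
  exact (measurable_ereal_toReal.neg.div_const 2).exp.ennreal_ofReal

lemma measurable_entFn : Measurable entFn := by
  unfold entFn
  refine .ite measurableSet_eq measurable_const (.ite measurableSet_eq measurable_const ?_)
  exact (measurable_const.add measurable_ereal_toReal.neg.exp).log.div_const _

lemma measurable_tanhHalf : Measurable tanhHalf := by
  unfold tanhHalf
  refine .ite measurableSet_eq measurable_const (.ite measurableSet_eq measurable_const ?_)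
  have htanh : Measurable tanh :=
    (funext tanh_eq_sinh_div_cosh : tanh = sinh / cosh) ▸ measurable_sinh.div measurable_cosh
  exact htanh.comp (measurable_ereal_toReal.div_const 2)

lemma measurable_atanhTwo : Measurable atanhTwo := by
  unfold atanhTwo SCLDPC.artanh
  refine .ite (measurableSet_le measurable_const measurable_id) measurable_const
    (.ite (measurableSet_le measurable_id measurable_const) measurable_const ?_)
  exact (measurable_const.mul (((measurable_const.add measurable_id).div
    (measurable_const.sub measurable_id)).log.div_const 2)).coe_real_ereal

lemma measurable_checkNode :
    Measurable fun p : EReal × EReal => atanhTwo (tanhHalf p.1 * tanhHalf p.2) :=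
  measurable_atanhTwo.comp
    ((measurable_tanhHalf.comp measurable_fst).mul (measurable_tanhHalf.comp measurable_snd))

lemma wt_top : wt ⊤ = 0 := by simp [wt]

lemma wt_bot : wt ⊥ = ⊤ := by simp [wt]

lemma wt_coe (x : ℝ) : wt x = ENNReal.ofReal (exp (-x / 2)) := by simp [wt]

lemma wt_le_one {α : EReal} (hα : 0 ≤ α) : wt α ≤ 1 := by
  induction α using EReal.rec with
  | bot => simp at hα
  | top => simp [wt_top]
  | coe x =>
    rw [wt_coe, ENNReal.ofReal_le_one, exp_le_one_iff]
    have : (0 : ℝ) ≤ x := mod_cast hα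
    linarith

lemma entFn_top : entFn ⊤ = 0 := by simp [entFn]

lemma entFn_coe (x : ℝ) : entFn x = logb 2 (1 + exp (-x)) := by simp [entFn]

lemma entFn_nonneg (α : EReal) : 0 ≤ entFn α := by
  unfold entFn
  split_ifs
  · rfl
  · rfl
  · exact logb_nonneg one_lt_two (by linarith [exp_pos (-α.toReal)])

lemma entFn_le_wt {α : EReal} (hα : α ≠ ⊥) : entFn α ≤ 2 / log 2 * (wt α).toReal := by
  induction α using EReal.rec with
  | bot => exact absurd rfl hα
  | top => simp [entFn_top, wt_top]
  | coe x =>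
    rw [entFn_coe, wt_coe, ENNReal.toReal_ofReal (exp_nonneg _), logb, div_mul_eq_mul_div,
      div_le_div_iff_of_pos_right (log_pos one_lt_two)]
    set w := exp (-x / 2)
    have hw : 0 < w := exp_pos _
    have hsq : exp (-x) = w ^ 2 := by rw [← exp_nat_mul]; ring_nf
    calc log (1 + exp (-x)) ≤ log ((1 + w) ^ 2) := by
          rw [hsq]; exact log_le_log (by positivity) (by nlinarith)
      _ = 2 * log (1 + w) := by rw [log_pow]; norm_num
      _ ≤ 2 * w := by linarith [log_le_sub_one_of_pos (by linarith : 0 < 1 + w)]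

lemma tanhHalf_top : tanhHalf ⊤ = 1 := by simp [tanhHalf]

lemma tanhHalf_bot : tanhHalf ⊥ = -1 := by simp [tanhHalf]

lemma tanhHalf_coe (x : ℝ) : tanhHalf x = tanh (x / 2) := by simp [tanhHalf]

lemma tanhHalf_le_one (α : EReal) : tanhHalf α ≤ 1 := by
  induction α using EReal.rec with
  | bot => simp [tanhHalf_bot]
  | top => simp [tanhHalf_top]
  | coe x => exact (tanhHalf_coe x ▸ tanh_lt_one _).le

lemma neg_one_lt_tanhHalf {α : EReal} (hα : α ≠ ⊥) : -1 < tanhHalf α := by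
  induction α using EReal.rec with
  | bot => exact absurd rfl hα
  | top => simp [tanhHalf_top]
  | coe x => exact tanhHalf_coe x ▸ neg_one_lt_tanh _

lemma tanhHalf_add {α β : EReal} (hα : α ≠ ⊥) (hβ : β ≠ ⊥) :
    tanhHalf (α + β) = (tanhHalf α + tanhHalf β) / (1 + tanhHalf α * tanhHalf β) := by
  induction α using EReal.rec with
  | bot => exact absurd rfl hα
  | top =>
    have := neg_one_lt_tanhHalf hβ
    rw [EReal.top_add_of_ne_bot hβ, tanhHalf_top, one_mul, div_self (by linarith)]
  | coe x =>
    induction β using EReal.rec with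
    | bot => exact absurd rfl hβ
    | top =>
      have := tanhHalf_coe x ▸ neg_one_lt_tanh (x / 2)
      rw [EReal.coe_add_top, tanhHalf_top, mul_one, add_comm, div_self (by linarith)]
    | coe y => simp only [← EReal.coe_add, tanhHalf_coe, add_div, Real.tanh_add]

lemma atanhTwo_tanhHalf (α : EReal) : atanhTwo (tanhHalf α) = α := by
  induction α using EReal.rec with
  | bot => simp [tanhHalf_bot, atanhTwo]
  | top => simp [tanhHalf_top, atanhTwo]
  | coe x =>
    have h1 := tanh_lt_one (x / 2)
    have h2 := neg_one_lt_tanh (x / 2)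
    have hartanh : SCLDPC.artanh (tanh (x / 2)) = Real.artanh (tanh (x / 2)) := by
      rw [artanh_eq_half_log ⟨h2.le, h1.le⟩, SCLDPC.artanh]; ring
    rw [tanhHalf_coe, atanhTwo, if_neg (not_le.2 h1), if_neg (not_le.2 h2), hartanh, artanh_tanh]
    norm_num [mul_div_cancel₀]

lemma entFn_atanhTwo {t : ℝ} (ht : -1 < t) (ht' : t ≤ 1) :
    entFn (atanhTwo t) = logb 2 (2 / (1 + t)) := by
  rcases ht'.eq_or_lt with rfl | ht'
  · norm_num [atanhTwo, entFn_top]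
  have hq : 0 < (1 + t) / (1 - t) := div_pos (by linarith) (by linarith)
  have ht0 : 1 + t ≠ 0 := by linarith
  rw [atanhTwo, if_neg (not_le.2 ht'), if_neg (not_le.2 ht), entFn_coe, SCLDPC.artanh,
    show -(2 * (log ((1 + t) / (1 - t)) / 2)) = -log ((1 + t) / (1 - t)) by ring,
    exp_neg, exp_log hq]
  congr 1
  field_simp
  ring

lemma entFn_eq_logb_tanhHalf {α : EReal} (hα : α ≠ ⊥) :
    entFn α = logb 2 (2 / (1 + tanhHalf α)) := by
  conv_lhs => rw [← atanhTwo_tanhHalf α]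
  exact entFn_atanhTwo (neg_one_lt_tanhHalf hα) (tanhHalf_le_one α)

theorem entFn_add_add_entFn_checkNode {α β : EReal} (hα : α ≠ ⊥) (hβ : β ≠ ⊥) :
    entFn (α + β) + entFn (atanhTwo (tanhHalf α * tanhHalf β)) = entFn α + entFn β := by
  have hsum : α + β ≠ ⊥ := by simp [EReal.add_eq_bot_iff, hα, hβ]
  rw [entFn_eq_logb_tanhHalf hsum, tanhHalf_add hα hβ, entFn_eq_logb_tanhHalf hα,
    entFn_eq_logb_tanhHalf hβ]
  have ha := neg_one_lt_tanhHalf hα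
  have hb := neg_one_lt_tanhHalf hβ
  have ha' := tanhHalf_le_one α
  have hb' := tanhHalf_le_one β
  generalize tanhHalf α = a at *
  generalize tanhHalf β = b at *
  have ha0 : 0 < 1 + a := by linarith
  have hb0 : 0 < 1 + b := by linarith
  have hab : 0 < 1 + a * b := by nlinarith
  have hsum' : 1 + (a + b) / (1 + a * b) = (1 + a) * (1 + b) / (1 + a * b) := by
    field_simp; ring
  rw [entFn_atanhTwo (by linarith) (by nlinarith), hsum',
    ← logb_mul (div_pos two_pos (div_pos (mul_pos ha0 hb0) hab)).ne' (div_pos two_pos hab).ne',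
    ← logb_mul (div_pos two_pos ha0).ne' (div_pos two_pos hb0).ne']
  congr 1
  field_simp

lemma IsSymmMeasure.measure_bot {μ : Measure EReal} (hμ : IsSymmMeasure μ) : μ {⊥} = 0 := by
  have h := hμ {⊤} (measurableSet_singleton _)
  have hpre : (fun a : EReal => -a) ⁻¹' {⊤} = {⊥} := by ext a; simp
  rw [hpre, lintegral_singleton, lintegral_singleton, wt_top, wt_bot, zero_mul] at h
  by_contra hne
  exact ENNReal.top_ne_zero (ENNReal.top_mul hne ▸ h)

lemma IsSymmMeasure.ae_ne_bot {μ : Measure EReal} (hμ : IsSymmMeasure μ) : ∀ᵐ α ∂μ, α ≠ ⊥ :=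
  compl_mem_ae_iff.2 hμ.measure_bot

lemma setLIntegral_wt_le_measure_univ {μ : Measure EReal} {s : Set EReal} (hs : s ⊆ Ici 0) :
    ∫⁻ α in s, wt α ∂μ ≤ μ univ :=
  calc ∫⁻ α in s, wt α ∂μ ≤ ∫⁻ _ in s, 1 ∂μ :=
        setLIntegral_mono measurable_const fun _ hα => wt_le_one (hs hα)
    _ = μ s := setLIntegral_one s
    _ ≤ μ univ := measure_mono (subset_univ s)

lemma IsSymmMeasure.lintegral_wt_le {μ : Measure EReal} (hμ : IsSymmMeasure μ) :
    ∫⁻ α, wt α ∂μ ≤ 2 * μ univ := by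
  have hpre : (fun a : EReal => -a) ⁻¹' Ioi 0 = Iio 0 := by ext a; simp [EReal.neg_pos]
  calc ∫⁻ α, wt α ∂μ = ∫⁻ α in Ici 0, wt α ∂μ + ∫⁻ α in (Ici 0)ᶜ, wt α ∂μ :=
        (lintegral_add_compl _ measurableSet_Ici).symm
    _ = ∫⁻ α in Ici 0, wt α ∂μ + ∫⁻ α in Ioi 0, wt α ∂μ := by
        rw [compl_Ici, ← hpre, hμ _ measurableSet_Ioi]
    _ ≤ μ univ + μ univ :=
        add_le_add (setLIntegral_wt_le_measure_univ subset_rfl)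
          (setLIntegral_wt_le_measure_univ Ioi_subset_Ici_self)
    _ = 2 * μ univ := (two_mul _).symm

lemma IsSymmMeasure.integrable_entFn {μ : Measure EReal} [IsFiniteMeasure μ]
    (hμ : IsSymmMeasure μ) : Integrable entFn μ := by
  have hwt : Integrable (fun α => (wt α).toReal) μ :=
    integrable_toReal_of_lintegral_ne_top measurable_wt.aemeasurable <|
      ne_top_of_le_ne_top (ENNReal.mul_ne_top ENNReal.ofNat_ne_top (measure_ne_top μ univ))
        hμ.lintegral_wt_le
  refine (hwt.const_mul (2 / log 2)).mono' measurable_entFn.aestronglyMeasurable ?_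
  filter_upwards [hμ.ae_ne_bot] with α hα
  rw [norm_of_nonneg (entFn_nonneg α)]
  exact entFn_le_wt hα

lemma _root_.MeasureTheory.Measure.toJordanDecomposition_toSignedMeasure {X : Type*}
    [MeasurableSpace X] (μ : Measure X) [IsFiniteMeasure μ] :
    μ.toSignedMeasure.toJordanDecomposition = ⟨μ, 0, .zero_right⟩ :=
  SignedMeasure.toJordanDecomposition_eq <| by
    simp [JordanDecomposition.toSignedMeasure]

lemma jp_toSignedMeasure (μ : Measure EReal) [IsFiniteMeasure μ] : jp μ.toSignedMeasure = μ := by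
  rw [jp, μ.toJordanDecomposition_toSignedMeasure]

lemma jn_toSignedMeasure (μ : Measure EReal) [IsFiniteMeasure μ] : jn μ.toSignedMeasure = 0 := by
  rw [jn, μ.toJordanDecomposition_toSignedMeasure]

lemma H_toSignedMeasure (μ : Measure EReal) [IsFiniteMeasure μ] :
    H μ.toSignedMeasure = ∫ α, entFn α ∂μ := by
  simp [H, sInt, jp_toSignedMeasure, jn_toSignedMeasure]

lemma sConv_toSignedMeasure (μ ν : Measure EReal) [IsFiniteMeasure μ] [IsFiniteMeasure ν] :
    sConv μ.toSignedMeasure ν.toSignedMeasure = (mConv μ ν).toSignedMeasure := by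
  simp [sConv, mConv, jp_toSignedMeasure, jn_toSignedMeasure]

lemma sCheck_toSignedMeasure (μ ν : Measure EReal) [IsFiniteMeasure μ] [IsFiniteMeasure ν] :
    sCheck μ.toSignedMeasure ν.toSignedMeasure = (mCheck μ ν).toSignedMeasure := by
  simp [sCheck, mCheck, jp_toSignedMeasure, jn_toSignedMeasure]

theorem _root_.MeasureTheory.integral_add_integral_eq_of_nonneg_of_ae_add_eq {X : Type*}
    [MeasurableSpace X] {μ : Measure X} {f g s : X → ℝ} (hf : AEStronglyMeasurable f μ)
    (hg : AEStronglyMeasurable g μ) (hf0 : ∀ᵐ x ∂μ, 0 ≤ f x) (hg0 : ∀ᵐ x ∂μ, 0 ≤ g x)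
    (hs : Integrable s μ) (hfg : ∀ᵐ x ∂μ, f x + g x = s x) :
    ∫ x, f x ∂μ + ∫ x, g x ∂μ = ∫ x, s x ∂μ := by
  have hfi : Integrable f μ := hs.mono' hf <| by
    filter_upwards [hf0, hg0, hfg] with x h1 h2 h3
    rw [norm_of_nonneg h1]; linarith
  have hgi : Integrable g μ := hs.mono' hg <| by
    filter_upwards [hf0, hg0, hfg] with x h1 h2 h3
    rw [norm_of_nonneg h2]; linarith
  rw [← integral_add hfi hgi]
  exact integral_congr_ae hfg

theorem _root_.MeasureTheory.integral_prod_fst_add_snd {X Y : Type*} [MeasurableSpace X]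
    [MeasurableSpace Y] {μ : Measure X} {ν : Measure Y} [IsProbabilityMeasure μ]
    [IsProbabilityMeasure ν] {f : X → ℝ} {g : Y → ℝ} (hf : Integrable f μ) (hg : Integrable g ν) :
    ∫ p, f p.1 + g p.2 ∂μ.prod ν = ∫ x, f x ∂μ + ∫ y, g y ∂ν := by
  rw [integral_add (hf.comp_fst ν) (hg.comp_snd μ), integral_fun_fst, integral_fun_snd]
  simp

/-- Duality rule for entropy: for all symmetric probability measures
`x1, x2 ∈ X`, `H(x1 ⊛ x2) + H(x1 ⊠ x2) = H(x1) + H(x2)`. -/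
theorem entropy_duality (x1 x2 : SM) (h1 : MemX x1) (h2 : MemX x2) :
    H (sConv x1 x2) + H (sCheck x1 x2) = H x1 + H x2 := by
  obtain ⟨⟨μ, _, rfl⟩, hμ, -⟩ := h1
  obtain ⟨⟨ν, _, rfl⟩, hν, -⟩ := h2
  rw [jp_toSignedMeasure] at hμ hν
  have hne : ∀ᵐ p ∂μ.prod ν, p.1 ≠ ⊥ ∧ p.2 ≠ ⊥ :=
    (Measure.quasiMeasurePreserving_fst.ae hμ.ae_ne_bot).and
      (Measure.quasiMeasurePreserving_snd.ae hν.ae_ne_bot)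
  rw [sConv_toSignedMeasure, sCheck_toSignedMeasure, H_toSignedMeasure, H_toSignedMeasure,
    H_toSignedMeasure, H_toSignedMeasure, mConv, mCheck,
    integral_map measurable_add.aemeasurable measurable_entFn.aestronglyMeasurable,
    integral_map measurable_checkNode.aemeasurable measurable_entFn.aestronglyMeasurable,
    ← integral_prod_fst_add_snd hμ.integrable_entFn hν.integrable_entFn]
  exact integral_add_integral_eq_of_nonneg_of_ae_add_eq
    (measurable_entFn.comp measurable_add).aestronglyMeasurable
    (measurable_entFn.comp measurable_checkNode).aestronglyMeasurable
    (ae_of_all _ fun _ => entFn_nonneg _) (ae_of_all _ fun _ => entFn_nonneg _)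
    ((hμ.integrable_entFn.comp_fst ν).add (hν.integrable_entFn.comp_snd μ))
    (hne.mono fun _ hp => entFn_add_add_entFn_checkNode hp.1 hp.2)

end SCLDPC
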